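/- arXiv:2209.05139 — 2 statements merged into one kernel-verified Lean document; each statement's English description precedes it below -/
import Mathlib

section
/- With A = B ⊗ I_N where B has i.i.d. symmetric Bernoulli ±1 entries, and J a block matrix whose blocks J^{kl} satisfy (J^{kl})ᵀ = T J^{kl} T, the random vector (I_{n_i} ⊗ T) A J A (I_{n_o} ⊗ T) e is an unbiased estimate of Jᵀ e for any fixed vector e ∈ ℝ^{N n_o}; i.e., its expectation equals Jᵀ e. -/
open Matrix Kronecker

lemma sum_sign_mul_sign (ni no : ℕ) (l m' : Fin ni) (k m : Fin no) :
    ∑ ω : Fin ni → Fin no → Bool,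
      (if ω l k then (1:ℝ) else -1) * (if ω m' m then 1 else -1)
    = if m' = l ∧ m = k then (Fintype.card (Fin ni → Fin no → Bool) : ℝ) else 0 := by
  by_cases h : m' = l ∧ m = k
  · obtain ⟨rfl, rfl⟩ := h
    rw [if_pos ⟨rfl, rfl⟩]
    have : ∀ ω : Fin ni → Fin no → Bool,
        (if ω m' m then (1:ℝ) else -1) * (if ω m' m then 1 else -1) = 1 := by
      intro ω; cases hb : ω m' m <;> simp [hb]
    rw [Finset.sum_congr rfl (fun ω _ => this ω), Finset.sum_const, Finset.card_univ]
    simp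
  · rw [if_neg h]
    set f : (Fin ni → Fin no → Bool) → ℝ :=
      fun ω => (if ω l k then (1:ℝ) else -1) * (if ω m' m then 1 else -1) with hf
    set F : (Fin ni → Fin no → Bool) → (Fin ni → Fin no → Bool) :=
      fun ω a b => if a = l ∧ b = k then !(ω a b) else ω a b with hFdef
    have hF : Function.Involutive F := by
      intro ω; funext a b
      by_cases hab : a = l ∧ b = k <;> simp [hFdef, hab]
    have hcomp : ∑ ω, f (F ω) = ∑ ω, f ω :=
      Equiv.sum_comp (⟨F, F, hF.leftInverse, hF.rightInverse⟩ : Equiv.Perm _) f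
    have hneg : ∀ ω, f (F ω) = - f ω := by
      intro ω
      have h1 : F ω l k = !(ω l k) := by simp [hFdef]
      have h2 : F ω m' m = ω m' m := by simp [hFdef, h]
      rw [hf]
      simp only [h1, h2]
      cases ω l k <;> cases ω m' m <;> norm_num
    rw [Finset.sum_congr rfl (fun ω _ => hneg ω), Finset.sum_neg_distrib] at hcomp
    linarith

lemma sum_mulVec' {n m : Type*} [Fintype m] {ι : Type*} (s : Finset ι)
    (M : ι → Matrix n m ℝ) (e : m → ℝ) :
    (∑ ω ∈ s, M ω) *ᵥ e = ∑ ω ∈ s, M ω *ᵥ e := by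
  ext i
  simp only [Matrix.mulVec, dotProduct, Matrix.sum_apply, Finset.sum_mul,
    Finset.sum_apply]
  exact Finset.sum_comm

/-- With `A = B ⊗ I_N`, `B` having i.i.d. symmetric Bernoulli ±1 entries (modeled
by a uniform sample `ω : Fin ni → Fin no → Bool`), and `J` a block matrix whose
blocks satisfy `(J^{kl})ᵀ = T J^{kl} T`, the random vector
`(I_{n_i} ⊗ T) A J A (I_{n_o} ⊗ T) e` is an unbiased estimate of `Jᵀ e`. -/
theorem unbiased_adjoint_estimate (N ni no : ℕ) (T : Matrix (Fin N) (Fin N) ℝ)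
    (hT : ∀ i j : Fin N, T i j = if j = i.rev then 1 else 0)
    (J : Matrix (Fin no × Fin N) (Fin ni × Fin N) ℝ)
    (hblocks : ∀ (k : Fin no) (l : Fin ni),
      (Matrix.of fun i j : Fin N => J (k, i) (l, j))ᵀ =
        T * Matrix.of (fun i j : Fin N => J (k, i) (l, j)) * T)
    (sign : Bool → ℝ) (hsign : sign = fun s => if s then 1 else -1)
    (A : (Fin ni → Fin no → Bool) → Matrix (Fin ni × Fin N) (Fin no × Fin N) ℝ)
    (hA : ∀ ω, A ω =
      (Matrix.of fun l m => sign (ω l m)) ⊗ₖ (1 : Matrix (Fin N) (Fin N) ℝ))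
    (e : Fin no × Fin N → ℝ) :
    ((Fintype.card (Fin ni → Fin no → Bool) : ℝ)⁻¹) •
      (∑ ω : Fin ni → Fin no → Bool,
        (((1 : Matrix (Fin ni) (Fin ni) ℝ) ⊗ₖ T) * (A ω * J * A ω) *
          ((1 : Matrix (Fin no) (Fin no) ℝ) ⊗ₖ T)) *ᵥ e) = Jᵀ *ᵥ e := by
  subst hsign
  set c : ℝ := (Fintype.card (Fin ni → Fin no → Bool) : ℝ) with hc
  have hc0 : c ≠ 0 := by
    rw [hc]; exact_mod_cast Fintype.card_ne_zero
  -- Step A: entrywise formula for A ω * J * A ω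
  have hAJA : ∀ ω, A ω * J * A ω =
      Matrix.of fun (p : Fin ni × Fin N) (q : Fin no × Fin N) =>
        ∑ k : Fin no, ∑ m'' : Fin ni,
          (if ω p.1 k then (1:ℝ) else -1) * J (k, p.2) (m'', q.2) *
            (if ω m'' q.1 then 1 else -1) := by
    intro ω
    ext ⟨l, i⟩ ⟨m, j⟩
    simp [hA, Matrix.mul_apply, Matrix.kroneckerMap_apply, Matrix.one_apply,
      Fintype.sum_prod_type, ite_mul, mul_ite, Finset.sum_mul, Finset.mul_sum]
    rw [Finset.sum_comm]
    refine Finset.sum_congr rfl fun x _ => ?_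
    by_cases hx : ω x m = true <;>
      simp [hx, Finset.sum_neg_distrib]
  -- Step B: expectation of A ω * J * A ω
  have hsum : ∑ ω : Fin ni → Fin no → Bool, A ω * J * A ω =
      c • Matrix.of (fun (p : Fin ni × Fin N) (q : Fin no × Fin N) =>
        J (q.1, p.2) (p.1, q.2)) := by
    ext ⟨l, i⟩ ⟨m, j⟩
    rw [Matrix.sum_apply]
    rw [Finset.sum_congr rfl (fun ω _ => by rw [hAJA ω])]
    simp only [Matrix.of_apply]
    rw [Finset.sum_comm]
    rw [Finset.sum_congr rfl (fun k _ => Finset.sum_comm)]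
    have step : ∀ (k : Fin no) (m'' : Fin ni),
        ∑ ω : Fin ni → Fin no → Bool,
          (if ω l k then (1:ℝ) else -1) * J (k, i) (m'', j) *
            (if ω m'' m then 1 else -1)
        = J (k, i) (m'', j) * (if m'' = l ∧ m = k then c else 0) := by
      intro k m''
      rw [← sum_sign_mul_sign ni no l m'' k m, Finset.mul_sum]
      exact Finset.sum_congr rfl fun ω _ => by ring
    rw [Finset.sum_congr rfl (fun k _ => Finset.sum_congr rfl (fun m'' _ => step k m''))]
    simp [ite_and, Finset.sum_ite_eq, Finset.sum_ite_eq', mul_comm]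
  -- Step C/D: the deterministic identity
  have hdet : ((1 : Matrix (Fin ni) (Fin ni) ℝ) ⊗ₖ T) *
      (Matrix.of (fun (p : Fin ni × Fin N) (q : Fin no × Fin N) =>
        J (q.1, p.2) (p.1, q.2))) *
      ((1 : Matrix (Fin no) (Fin no) ℝ) ⊗ₖ T) = Jᵀ := by
    ext ⟨l, i⟩ ⟨m, j⟩
    have hb := congrFun (congrFun (hblocks m l).symm i) j
    simp only [Matrix.transpose_apply, Matrix.of_apply, Matrix.mul_apply] at hb ⊢
    simp [Matrix.kroneckerMap_apply, Matrix.one_apply, Fintype.sum_prod_type,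
      ite_mul, mul_ite, Finset.sum_mul, Finset.mul_sum]
    rw [← hb]
    exact Finset.sum_congr rfl fun x _ => (Finset.sum_mul _ _ _).symm
  -- Put everything together
  rw [← sum_mulVec', ← Matrix.smul_mulVec]
  congr 1
  have : ∑ ω : Fin ni → Fin no → Bool,
      ((1 : Matrix (Fin ni) (Fin ni) ℝ) ⊗ₖ T) * (A ω * J * A ω) *
        ((1 : Matrix (Fin no) (Fin no) ℝ) ⊗ₖ T)
      = ((1 : Matrix (Fin ni) (Fin ni) ℝ) ⊗ₖ T) *
        (∑ ω : Fin ni → Fin no → Bool, A ω * J * A ω) *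
        ((1 : Matrix (Fin no) (Fin no) ℝ) ⊗ₖ T) := by
    rw [Matrix.mul_sum, Matrix.sum_mul]
  rw [this, hsum, Matrix.mul_smul, Matrix.smul_mul, hdet, smul_smul,
    inv_mul_cancel₀ hc0, one_smul]
end

section
/- If J is symmetric as a block matrix in the sense that J^{kl} = J^{lk} for all k, l (so J̃ = J), and each block satisfies (J^{kl})ᵀ = T J^{kl} T, then Jᵀ = (I_n ⊗ T) J (I_n ⊗ T), so the adjoint can be computed from a single experiment on J with time reversals. -/
open Matrix Kronecker

lemma TmulT_apply {N : ℕ} (T : Matrix (Fin N) (Fin N) ℝ)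
    (hT : ∀ i j : Fin N, T i j = if j = i.rev then 1 else 0)
    (B : Matrix (Fin N) (Fin N) ℝ) (i j : Fin N) :
    (T * B * T) i j = B i.rev j.rev := by
  simp only [Matrix.mul_apply, hT]
  simp only [Finset.sum_ite_eq', Finset.mem_univ, if_true, mul_comm, mul_ite, mul_one, mul_zero,
    ite_mul, one_mul, zero_mul]
  have hrev : ∀ x : Fin N, (j = x.rev) ↔ (x = j.rev) := fun x => by
    constructor <;> rintro rfl <;> simp
  simp only [hrev, Finset.sum_ite_eq', Finset.mem_univ, if_true]

/-- If `J` is block-symmetric (`J^{kl} = J^{lk}`, so `J̃ = J`) and each block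
satisfies `(J^{kl})ᵀ = T J^{kl} T`, then `Jᵀ = (I_n ⊗ T) J (I_n ⊗ T)`:
the adjoint can be computed from a single experiment on `J` with time reversals. -/
theorem adjoint_symmetric_block (N n : ℕ) (T : Matrix (Fin N) (Fin N) ℝ)
    (hT : ∀ i j : Fin N, T i j = if j = i.rev then 1 else 0)
    (J : Matrix (Fin n × Fin N) (Fin n × Fin N) ℝ)
    (hsym : ∀ (k l : Fin n) (i j : Fin N), J (k, i) (l, j) = J (l, i) (k, j))
    (hblocks : ∀ (k l : Fin n),
      (Matrix.of fun i j : Fin N => J (k, i) (l, j))ᵀ =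
        T * Matrix.of (fun i j : Fin N => J (k, i) (l, j)) * T) :
    Jᵀ = ((1 : Matrix (Fin n) (Fin n) ℝ) ⊗ₖ T) * J *
      ((1 : Matrix (Fin n) (Fin n) ℝ) ⊗ₖ T) := by
  ext ⟨k, i⟩ ⟨l, j⟩
  have hb := congrFun (congrFun (hblocks k l) i) j
  rw [TmulT_apply T hT] at hb
  have hRHS : (((1 : Matrix (Fin n) (Fin n) ℝ) ⊗ₖ T) * J *
      ((1 : Matrix (Fin n) (Fin n) ℝ) ⊗ₖ T)) (k, i) (l, j) = J (k, i.rev) (l, j.rev) := by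
    simp only [Matrix.mul_apply, kroneckerMap_apply, Matrix.one_apply, hT,
      Fintype.sum_prod_type]
    rw [Finset.sum_comm]
    simp [Finset.sum_ite_eq', mul_comm, ite_and]
    have hrev : ∀ x : Fin N, (j = x.rev) ↔ (x = j.rev) := fun x => by
      constructor <;> rintro rfl <;> simp
    simp only [hrev, Finset.sum_ite_eq', Finset.mem_univ, if_true]
  simp only [Matrix.transpose_apply, Matrix.of_apply] at hb
  rw [hRHS, ← hb, Matrix.transpose_apply]
  exact hsym l k j i
end
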